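/- In the controlled discrete route-switching process, let ŵ_i(x,s) = sup over all (position, route, accumulated-cost)-feedback policies of P(J_i^a(x) ≤ s). Then ŵ satisfies the dynamic programming equation ŵ_i(x,s) = max_{a ∈ A} Σ_{j=1}^M p_{ij} ŵ_j(F_i(x,a), s − K_i(x,a)) for x ∉ Q, with ŵ_i(x,s) = 1_{s ≥ q_i(x)} for x ∈ Q and ŵ_i(x,s) = 0 for x ∉ Q, s ≤ 0, where A is a finite action set, F_i(·,a) the controlled route, and K_i(·,a) > 0 the controlled step cost. -/

import Mathlib

/-!
Value iteration from `0` for the Bellman operator stabilises: every step costs at least `κ > 0`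
and negative budgets are worthless, so the `n`-th iterate is already exact on budgets below
`n * κ`. Its limit is thus a nonnegative fixed point vanishing at negative budgets. Such a fixed
point bounds every policy's finite-horizon success probability from above, and the policy acting
greedily with respect to it attains it within `⌈s / κ⌉` steps. Hence it is `ŵ`, and the dynamic
programming equation is its fixed-point equation.
-/

open Classical in
/-- Probability that the controlled route-switching process, run under the
feedback policy `pol : (position, mode, accumulated cost) → action`, starting
in mode `i` at node `x` with cost `c` accumulated so far, terminates in `Q`
within `n` steps with total cumulative cost at most the threshold `s`. -/
noncomputable def reachCtrl {X A : Type*} {M : ℕ} (Q : Set X)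
    (F : Fin M → X → A → X) (K : Fin M → X → A → ℝ) (q : Fin M → X → ℝ)
    (p : Fin M → Fin M → ℝ) (pol : X → Fin M → ℝ → A) (s : ℝ) :
    ℕ → Fin M → X → ℝ → ℝ
  | 0, i, x, c => if x ∈ Q ∧ c + q i x ≤ s then 1 else 0
  | n + 1, i, x, c =>
      if x ∈ Q then (if c + q i x ≤ s then 1 else 0)
      else ∑ j, p i j *
        reachCtrl Q F K q p pol s n j (F i x (pol x i c))
          (c + K i x (pol x i c))

/-- `P(J_i^a(x) ≤ s)`: the probability that the cumulative cost under policy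
`pol` does not exceed `s`, as a monotone limit over horizons. -/
noncomputable def polCDF {X A : Type*} {M : ℕ} (Q : Set X)
    (F : Fin M → X → A → X) (K : Fin M → X → A → ℝ) (q : Fin M → X → ℝ)
    (p : Fin M → Fin M → ℝ) (pol : X → Fin M → ℝ → A)
    (i : Fin M) (x : X) (s : ℝ) : ℝ :=
  ⨆ n : ℕ, reachCtrl Q F K q p pol s n i x 0

/-- The threshold-aware value function
`ŵ_i(x,s) = sup over feedback policies of P(J_i^a(x) ≤ s)`. -/
noncomputable def optCDF {X A : Type*} [Nonempty A] {M : ℕ} (Q : Set X)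
    (F : Fin M → X → A → X) (K : Fin M → X → A → ℝ) (q : Fin M → X → ℝ)
    (p : Fin M → Fin M → ℝ) (i : Fin M) (x : X) (s : ℝ) : ℝ :=
  ⨆ pol : X → Fin M → ℝ → A, polCDF Q F K q p pol i x s

open Finset Function

section Bellman

variable {X A : Type*} {M : ℕ} (Q : Set X) (F : Fin M → X → A → X)
  (K : Fin M → X → A → ℝ) (q : Fin M → X → ℝ) (p : Fin M → Fin M → ℝ)

open Classical in
/-- Value functions take the remaining budget `t = s - c` as last argument, where `c` is the cost
accumulated so far. -/
noncomputable def bellman (v : Fin M → X → ℝ → ℝ) : Fin M → X → ℝ → ℝ :=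
  fun i x t => if x ∈ Q then (if q i x ≤ t then 1 else 0)
    else ⨆ a : A, ∑ j, p i j * v j (F i x a) (t - K i x a)

noncomputable def bellmanValue (i : Fin M) (x : X) (t : ℝ) : ℝ :=
  ⨆ n : ℕ, (bellman Q F K q p)^[n] 0 i x t

variable {Q F K q p}

lemma bellman_of_mem {v : Fin M → X → ℝ → ℝ} {i : Fin M} {x : X} (hx : x ∈ Q) (t : ℝ) :
    bellman Q F K q p v i x t = if q i x ≤ t then 1 else 0 :=
  if_pos hx

lemma bellman_of_notMem {v : Fin M → X → ℝ → ℝ} {i : Fin M} {x : X} (hx : x ∉ Q) (t : ℝ) :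
    bellman Q F K q p v i x t = ⨆ a : A, ∑ j, p i j * v j (F i x a) (t - K i x a) :=
  if_neg hx

lemma bellman_mono [Finite A] (hp0 : ∀ i j, 0 ≤ p i j) : Monotone (bellman Q F K q p) := by
  intro v w hvw i x t
  by_cases hx : x ∈ Q
  · rw [bellman_of_mem hx, bellman_of_mem hx]
  · rw [bellman_of_notMem hx, bellman_of_notMem hx]
    exact ciSup_mono (Finite.bddAbove_range _) fun a =>
      sum_le_sum fun j _ => mul_le_mul_of_nonneg_left (hvw _ _ _) (hp0 i j)

lemma bellman_zero_nonneg : 0 ≤ bellman Q F K q p 0 := by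
  intro i x t
  by_cases hx : x ∈ Q
  · rw [bellman_of_mem hx]
    positivity
  · simp [bellman_of_notMem hx]

lemma bellman_eq_zero_of_notMem (hK : ∀ i x a, 0 < K i x a) {v : Fin M → X → ℝ → ℝ}
    (hv : ∀ i x t, t < 0 → v i x t = 0) {i : Fin M} {x : X} (hx : x ∉ Q) {t : ℝ} (ht : t ≤ 0) :
    bellman Q F K q p v i x t = 0 := by
  rw [bellman_of_notMem hx]
  have hterm (a : A) (j : Fin M) : v j (F i x a) (t - K i x a) = 0 :=
    hv _ _ _ (by linarith [hK i x a])
  simp [hterm]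

lemma bellman_eq_zero_of_neg (hq : ∀ i, ∀ x ∈ Q, 0 ≤ q i x) (hK : ∀ i x a, 0 < K i x a)
    {v : Fin M → X → ℝ → ℝ} (hv : ∀ i x t, t < 0 → v i x t = 0) {i : Fin M} {x : X} {t : ℝ}
    (ht : t < 0) : bellman Q F K q p v i x t = 0 := by
  by_cases hx : x ∈ Q
  · rw [bellman_of_mem hx, if_neg (by linarith [hq i x hx])]
  · exact bellman_eq_zero_of_notMem hK hv hx ht.le

lemma bellman_eq_of_eq_below {κ b : ℝ} (hK : ∀ i x a, κ ≤ K i x a) {v w : Fin M → X → ℝ → ℝ}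
    (hvw : ∀ i x t, t < b → v i x t = w i x t) {i : Fin M} {x : X} {t : ℝ} (ht : t < b + κ) :
    bellman Q F K q p v i x t = bellman Q F K q p w i x t := by
  by_cases hx : x ∈ Q
  · rw [bellman_of_mem hx, bellman_of_mem hx]
  · rw [bellman_of_notMem hx, bellman_of_notMem hx]
    refine iSup_congr fun a => sum_congr rfl fun j _ => ?_
    rw [hvw _ _ _ (by linarith [hK i x a])]

lemma bellman_iterate_eq_zero (hq : ∀ i, ∀ x ∈ Q, 0 ≤ q i x) (hK : ∀ i x a, 0 < K i x a)
    (n : ℕ) {i : Fin M} {x : X} {t : ℝ} (ht : t < 0) :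
    (bellman Q F K q p)^[n] 0 i x t = 0 := by
  induction n generalizing i x t with
  | zero => rfl
  | succ n ih =>
    rw [iterate_succ_apply']
    exact bellman_eq_zero_of_neg hq hK (fun _ _ _ => ih) ht

lemma bellman_iterate_add_eq {κ : ℝ} (hκ : 0 < κ) (hK : ∀ i x a, κ ≤ K i x a)
    (hq : ∀ i, ∀ x ∈ Q, 0 ≤ q i x) (n m : ℕ) {i : Fin M} {x : X} {t : ℝ} (ht : t < n * κ) :
    (bellman Q F K q p)^[n + m] 0 i x t = (bellman Q F K q p)^[n] 0 i x t := by
  have hKpos (i x a) : 0 < K i x a := hκ.trans_le (hK i x a)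
  induction n generalizing i x t with
  | zero =>
    rw [Nat.cast_zero, zero_mul] at ht
    rw [bellman_iterate_eq_zero hq hKpos _ ht, bellman_iterate_eq_zero hq hKpos _ ht]
  | succ n ih =>
    rw [Nat.add_right_comm, iterate_succ_apply', iterate_succ_apply']
    exact bellman_eq_of_eq_below hK (fun _ _ _ => ih) (by push_cast at ht; linarith)

variable [Finite A]

lemma bellmanValue_eq_iterate {κ : ℝ} (hκ : 0 < κ) (hK : ∀ i x a, κ ≤ K i x a)
    (hq : ∀ i, ∀ x ∈ Q, 0 ≤ q i x) (hp0 : ∀ i j, 0 ≤ p i j) {n : ℕ} {t : ℝ} (ht : t < n * κ)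
    (i : Fin M) (x : X) :
    bellmanValue Q F K q p i x t = (bellman Q F K q p)^[n] 0 i x t := by
  have hle (m : ℕ) : (bellman Q F K q p)^[m] 0 i x t ≤ (bellman Q F K q p)^[n] 0 i x t := by
    rcases le_total m n with hmn | hnm
    · exact (bellman_mono hp0).monotone_iterate_of_le_map bellman_zero_nonneg hmn i x t
    · obtain ⟨k, rfl⟩ := Nat.exists_eq_add_of_le hnm
      exact (bellman_iterate_add_eq hκ hK hq n k ht).le
  exact le_antisymm (ciSup_le hle) (le_ciSup ⟨_, Set.forall_mem_range.2 hle⟩ n)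

lemma isFixedPt_bellmanValue {κ : ℝ} (hκ : 0 < κ) (hK : ∀ i x a, κ ≤ K i x a)
    (hq : ∀ i, ∀ x ∈ Q, 0 ≤ q i x) (hp0 : ∀ i j, 0 ≤ p i j) :
    IsFixedPt (bellman Q F K q p) (bellmanValue Q F K q p) := by
  funext i x t
  obtain ⟨n, hn⟩ := exists_lt_nsmul hκ t
  rw [nsmul_eq_mul] at hn
  have hn' : t < (n + 1 : ℕ) * κ := by push_cast; linarith
  rw [bellmanValue_eq_iterate hκ hK hq hp0 hn', iterate_succ_apply']
  exact bellman_eq_of_eq_below hK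
    (fun j y u hu => bellmanValue_eq_iterate hκ hK hq hp0 hu j y) (by linarith)

end Bellman

section Policies

variable {X A : Type*} {M : ℕ} {Q : Set X} {F : Fin M → X → A → X}
  {K : Fin M → X → A → ℝ} {q : Fin M → X → ℝ} {p : Fin M → Fin M → ℝ}

lemma reachCtrl_of_mem (pol : X → Fin M → ℝ → A) (s : ℝ) (n : ℕ) (i : Fin M) {x : X}
    (hx : x ∈ Q) (c : ℝ) :
    reachCtrl Q F K q p pol s n i x c = if q i x ≤ s - c then 1 else 0 := by
  cases n <;> simp [reachCtrl, hx, le_sub_iff_add_le']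

lemma reachCtrl_succ_of_notMem (pol : X → Fin M → ℝ → A) (s : ℝ) (n : ℕ) (i : Fin M) {x : X}
    (hx : x ∉ Q) (c : ℝ) :
    reachCtrl Q F K q p pol s (n + 1) i x c = ∑ j, p i j *
      reachCtrl Q F K q p pol s n j (F i x (pol x i c)) (c + K i x (pol x i c)) :=
  if_neg hx

lemma reachCtrl_le_of_isFixedPt [Finite A] (hp0 : ∀ i j, 0 ≤ p i j)
    {v : Fin M → X → ℝ → ℝ} (hv : IsFixedPt (bellman Q F K q p) v) (hv0 : 0 ≤ v)
    (pol : X → Fin M → ℝ → A) (s : ℝ) (n : ℕ) (i : Fin M) (x : X) (c : ℝ) :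
    reachCtrl Q F K q p pol s n i x c ≤ v i x (s - c) := by
  induction n generalizing i x c with
  | zero =>
    by_cases hx : x ∈ Q
    · rw [reachCtrl_of_mem pol s 0 i hx, ← hv, bellman_of_mem hx]
    · simpa [reachCtrl, hx] using hv0 i x (s - c)
  | succ n ih =>
    by_cases hx : x ∈ Q
    · rw [reachCtrl_of_mem pol s _ i hx, ← hv, bellman_of_mem hx]
    set a := pol x i c
    calc reachCtrl Q F K q p pol s (n + 1) i x c
        = ∑ j, p i j * reachCtrl Q F K q p pol s n j (F i x a) (c + K i x a) :=
          reachCtrl_succ_of_notMem pol s n i hx c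
      _ ≤ ∑ j, p i j * v j (F i x a) (s - c - K i x a) := by
          refine sum_le_sum fun j _ => mul_le_mul_of_nonneg_left ?_ (hp0 i j)
          simpa only [sub_add_eq_sub_sub] using ih j (F i x a) (c + K i x a)
      _ ≤ bellman Q F K q p v i x (s - c) := by
          rw [bellman_of_notMem hx]
          exact le_ciSup (f := fun b => ∑ j, p i j * v j (F i x b) (s - c - K i x b))
            (Finite.bddAbove_range _) a
      _ = v i x (s - c) := congrFun₃ hv i x (s - c)

open Classical in
noncomputable def greedyPolicy [Finite A] [Nonempty A] (F : Fin M → X → A → X)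
    (K : Fin M → X → A → ℝ) (p : Fin M → Fin M → ℝ) (v : Fin M → X → ℝ → ℝ) (s : ℝ) :
    X → Fin M → ℝ → A :=
  fun x i c => (Finite.exists_max fun a => ∑ j, p i j * v j (F i x a) (s - c - K i x a)).choose

lemma bellman_eq_greedyPolicy [Finite A] [Nonempty A] (v : Fin M → X → ℝ → ℝ) (s : ℝ)
    {i : Fin M} {x : X} (hx : x ∉ Q) (c : ℝ) :
    bellman Q F K q p v i x (s - c) =
      ∑ j, p i j * v j (F i x (greedyPolicy F K p v s x i c))
        (s - c - K i x (greedyPolicy F K p v s x i c)) := by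
  let f := fun a => ∑ j, p i j * v j (F i x a) (s - c - K i x a)
  rw [bellman_of_notMem hx]
  exact le_antisymm (ciSup_le (Finite.exists_max f).choose_spec)
    (le_ciSup (Finite.bddAbove_range f) _)

/-- Budgets below `n * κ` are exhausted within `n` steps, which is why a horizon `n` suffices. -/
lemma le_reachCtrl_greedyPolicy [Finite A] [Nonempty A] {κ : ℝ} (hK : ∀ i x a, κ ≤ K i x a)
    (hp0 : ∀ i j, 0 ≤ p i j) {v : Fin M → X → ℝ → ℝ} (hv : IsFixedPt (bellman Q F K q p) v)
    (hv_neg : ∀ i x t, t < 0 → v i x t = 0) (s : ℝ) (n : ℕ) (i : Fin M) (x : X) (c : ℝ)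
    (hc : s - c < n * κ) :
    v i x (s - c) ≤ reachCtrl Q F K q p (greedyPolicy F K p v s) s n i x c := by
  induction n generalizing i x c with
  | zero =>
    by_cases hx : x ∈ Q
    · rw [reachCtrl_of_mem _ s 0 i hx, ← hv, bellman_of_mem hx]
    · rw [hv_neg i x _ (by simpa using hc)]
      simp [reachCtrl, hx]
  | succ n ih =>
    by_cases hx : x ∈ Q
    · rw [reachCtrl_of_mem _ s _ i hx, ← hv, bellman_of_mem hx]
    set a := greedyPolicy F K p v s x i c
    calc v i x (s - c)
        = ∑ j, p i j * v j (F i x a) (s - c - K i x a) :=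
          (congrFun₃ hv i x (s - c)).symm.trans (bellman_eq_greedyPolicy v s hx c)
      _ ≤ ∑ j, p i j *
            reachCtrl Q F K q p (greedyPolicy F K p v s) s n j (F i x a) (c + K i x a) := by
          refine sum_le_sum fun j _ => mul_le_mul_of_nonneg_left ?_ (hp0 i j)
          rw [← sub_add_eq_sub_sub]
          exact ih j (F i x a) (c + K i x a) (by push_cast at hc; linarith [hK i x a])
      _ = reachCtrl Q F K q p (greedyPolicy F K p v s) s (n + 1) i x c :=
          (reachCtrl_succ_of_notMem _ s n i hx c).symm

end Policies

section Value

variable {X A : Type*} [Finite A] {M : ℕ} {Q : Set X} {F : Fin M → X → A → X}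
  {K : Fin M → X → A → ℝ} {q : Fin M → X → ℝ} {p : Fin M → Fin M → ℝ}
  {κ : ℝ}

lemma bellmanValue_nonneg (hκ : 0 < κ) (hK : ∀ i x a, κ ≤ K i x a)
    (hq : ∀ i, ∀ x ∈ Q, 0 ≤ q i x) (hp0 : ∀ i j, 0 ≤ p i j) : 0 ≤ bellmanValue Q F K q p := by
  intro i x t
  obtain ⟨n, hn⟩ := exists_lt_nsmul hκ t
  rw [nsmul_eq_mul] at hn
  rw [bellmanValue_eq_iterate hκ hK hq hp0 hn]
  exact (bellman_mono hp0).monotone_iterate_of_le_map bellman_zero_nonneg (Nat.zero_le n) i x t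

lemma bellmanValue_eq_zero_of_neg (hκ : 0 < κ) (hK : ∀ i x a, κ ≤ K i x a)
    (hq : ∀ i, ∀ x ∈ Q, 0 ≤ q i x) (hp0 : ∀ i j, 0 ≤ p i j) (i : Fin M) (x : X) {t : ℝ}
    (ht : t < 0) : bellmanValue Q F K q p i x t = 0 :=
  bellmanValue_eq_iterate hκ hK hq hp0 (n := 0) (by simpa using ht) i x

theorem optCDF_eq_bellmanValue [Nonempty A] (hκ : 0 < κ) (hK : ∀ i x a, κ ≤ K i x a)
    (hq : ∀ i, ∀ x ∈ Q, 0 ≤ q i x) (hp0 : ∀ i j, 0 ≤ p i j) :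
    optCDF Q F K q p = bellmanValue Q F K q p := by
  funext i x s
  have hfix := isFixedPt_bellmanValue (F := F) hκ hK hq hp0
  have hreach (pol : X → Fin M → ℝ → A) (n : ℕ) :
      reachCtrl Q F K q p pol s n i x 0 ≤ bellmanValue Q F K q p i x s := by
    simpa using
      reachCtrl_le_of_isFixedPt hp0 hfix (bellmanValue_nonneg hκ hK hq hp0) pol s n i x 0
  have hpol (pol : X → Fin M → ℝ → A) :
      polCDF Q F K q p pol i x s ≤ bellmanValue Q F K q p i x s :=
    ciSup_le (hreach pol)
  refine le_antisymm (ciSup_le hpol) ?_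
  obtain ⟨N, hN⟩ := exists_lt_nsmul hκ s
  set greedy := greedyPolicy F K p (bellmanValue Q F K q p) s
  calc bellmanValue Q F K q p i x s ≤ reachCtrl Q F K q p greedy s N i x 0 := by
        simpa using le_reachCtrl_greedyPolicy hK hp0 hfix
          (bellmanValue_eq_zero_of_neg hκ hK hq hp0) s N i x 0 (by simpa using hN)
    _ ≤ polCDF Q F K q p greedy i x s := le_ciSup ⟨_, Set.forall_mem_range.2 (hreach greedy)⟩ N
    _ ≤ optCDF Q F K q p i x s := le_ciSup ⟨_, Set.forall_mem_range.2 hpol⟩ greedy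

end Value

theorem optCDF_dynamic_programming_general {X A : Type*} [Fintype A]
    [Nonempty A] {M : ℕ} (Q : Set X)
    (F : Fin M → X → A → X) (K : Fin M → X → A → ℝ) (q : Fin M → X → ℝ)
    (p : Fin M → Fin M → ℝ) (κ : ℝ) (hκ : 0 < κ)
    (hK : ∀ i x a, κ ≤ K i x a) (hq : ∀ i, ∀ x ∈ Q, 0 ≤ q i x)
    (hp0 : ∀ i j, 0 ≤ p i j) :
    (∀ i : Fin M, ∀ x ∉ Q, ∀ s : ℝ,
        optCDF Q F K q p i x s
          = ⨆ a : A, ∑ j, p i j * optCDF Q F K q p j (F i x a) (s - K i x a)) ∧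
    (∀ i : Fin M, ∀ x ∈ Q, ∀ s : ℝ,
        (q i x ≤ s → optCDF Q F K q p i x s = 1) ∧
        (s < q i x → optCDF Q F K q p i x s = 0)) ∧
    (∀ i : Fin M, ∀ x ∉ Q, ∀ s : ℝ, s ≤ 0 → optCDF Q F K q p i x s = 0) := by
  rw [optCDF_eq_bellmanValue hκ hK hq hp0]
  have hfix (i x s) := congrFun₃ (isFixedPt_bellmanValue (F := F) hκ hK hq hp0) i x s
  refine ⟨fun i x hx s => ?_, fun i x hx s => ?_, fun i x hx s hs => ?_⟩
  · exact (hfix i x s).symm.trans (bellman_of_notMem hx s)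
  · rw [← hfix, bellman_of_mem hx]
    exact ⟨fun h => if_pos h, fun h => if_neg (not_le.2 h)⟩
  · rw [← hfix]
    exact bellman_eq_zero_of_notMem (fun i x a => hκ.trans_le (hK i x a))
      (fun j y _ => bellmanValue_eq_zero_of_neg hκ hK hq hp0 j y) hx hs

/-- **Dynamic programming equation for the threshold-aware value function of
the controlled route-switching process:** for `x ∉ Q`,
`ŵ_i(x,s) = max_{a∈A} Σ_j p_{ij} ŵ_j(F_i(x,a), s − K_i(x,a))`, with
`ŵ_i(x,s) = 1_{s ≥ q_i(x)}` on `Q` and `ŵ_i(x,s) = 0` for `x ∉ Q, s ≤ 0`. -/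
theorem optCDF_dynamic_programming {X A : Type*} [Fintype X] [Fintype A]
    [Nonempty A] {M : ℕ} (Q : Set X)
    (F : Fin M → X → A → X) (K : Fin M → X → A → ℝ) (q : Fin M → X → ℝ)
    (p : Fin M → Fin M → ℝ) (κ : ℝ) (hκ : 0 < κ)
    (hK : ∀ i x a, κ ≤ K i x a) (hq : ∀ i, ∀ x ∈ Q, 0 ≤ q i x)
    (hp0 : ∀ i j, 0 ≤ p i j) (hp1 : ∀ i, ∑ j, p i j = 1) :
    (∀ i : Fin M, ∀ x ∉ Q, ∀ s : ℝ,
        optCDF Q F K q p i x s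
          = ⨆ a : A, ∑ j, p i j * optCDF Q F K q p j (F i x a) (s - K i x a)) ∧
    (∀ i : Fin M, ∀ x ∈ Q, ∀ s : ℝ,
        (q i x ≤ s → optCDF Q F K q p i x s = 1) ∧
        (s < q i x → optCDF Q F K q p i x s = 0)) ∧
    (∀ i : Fin M, ∀ x ∉ Q, ∀ s : ℝ, s ≤ 0 → optCDF Q F K q p i x s = 0) :=
  optCDF_dynamic_programming_general Q F K q p κ hκ hK hq hp0
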